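/- Let k ≥ 2 and let ℓ and m be k-subsets with ℓ_i = m_j for some indices 1 ≤ i, j ≤ k. Let ℓ̃ and m̃ be the (k−1)-subsets obtained by deleting the i-th entry of ℓ and the j-th entry of m respectively. Then α(ℓ̃, m̃) = α(ℓ,m) − 1. -/
import Mathlib


/-- `α(ℓ,m)`: the largest `p ∈ {1,…,k}` such that `ℓ i ≤ m j` for all `1 ≤ i,j ≤ k`
with `j − i = k − p`, and `0` if no such `p` exists. -/
noncomputable def kAlpha (k : ℕ) (ℓ m : Fin k → ℤ) : ℕ :=
  sSup {p : ℕ | 1 ≤ p ∧ p ≤ k ∧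
    ∀ i j : Fin k, (j.val : ℤ) - (i.val : ℤ) = (k : ℤ) - (p : ℤ) → ℓ i ≤ m j}

/-- Natural-number reformulation of the diagonal condition. -/
def Cond (k p : ℕ) (ℓ m : Fin k → ℤ) : Prop :=
  ∀ i j : Fin k, j.val + p = i.val + k → ℓ i ≤ m j

lemma kAlpha_eq (k : ℕ) (ℓ m : Fin k → ℤ) :
    kAlpha k ℓ m = sSup {p : ℕ | 1 ≤ p ∧ p ≤ k ∧ Cond k p ℓ m} := by
  unfold kAlpha
  congr 1
  ext p
  simp only [Set.mem_setOf_eq, Cond]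
  constructor <;> rintro ⟨h1, h2, h3⟩ <;>
    exact ⟨h1, h2, fun i j hij => h3 i j (by omega)⟩

lemma cond_mono {k p q : ℕ} {ℓ m : Fin k → ℤ} (hm : StrictMono m)
    (hcond : Cond k p ℓ m) (hq : q ≤ p) (hp : p ≤ k) : Cond k q ℓ m := by
  intro i j hij
  have hi := i.isLt
  have hj := j.isLt
  calc ℓ i ≤ m ⟨j.val - (p - q), by omega⟩ :=
        hcond i _ (by simp only [Fin.val_mk]; omega)
    _ ≤ m j := hm.monotone (by simp only [Fin.le_def, Fin.val_mk]; omega)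

lemma succAbove_val {n : ℕ} (i : Fin (n + 1)) (a : Fin n) :
    (i.succAbove a).val = if a.val < i.val then a.val else a.val + 1 := by
  rcases Nat.lt_or_ge a.val i.val with hlt | hge
  · rw [if_pos hlt, Fin.succAbove_of_castSucc_lt _ _ (by simp [Fin.lt_def, hlt]),
      Fin.coe_castSucc]
  · rw [if_neg (Nat.not_lt.mpr hge),
      Fin.succAbove_of_le_castSucc _ _ (by simp [Fin.le_def, hge]), Fin.val_succ]

set_option maxHeartbeats 1000000 in
/-- Let `k = n + 1 ≥ 2` and let `ℓ`, `m` be `k`-subsets with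
`ℓ i = m j`.  Deleting the `i`-th entry of `ℓ` and the `j`-th entry of `m`
(implemented via `Fin.succAbove`) yields `(k−1)`-subsets `ℓ̃ = ℓ ∘ i.succAbove`,
`m̃ = m ∘ j.succAbove`; then `α(ℓ̃,m̃) = α(ℓ,m) − 1`. -/
theorem alpha_delete_eq (n : ℕ) (hn : 1 ≤ n) (ℓ m : Fin (n + 1) → ℤ)
    (hℓ : StrictMono ℓ) (hm : StrictMono m) (i j : Fin (n + 1)) (h : ℓ i = m j) :
    (kAlpha n (ℓ ∘ i.succAbove) (m ∘ j.succAbove) : ℤ) = (kAlpha (n + 1) ℓ m : ℤ) - 1 := by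
  have hm' : StrictMono (m ∘ j.succAbove) := hm.comp (Fin.strictMono_succAbove j)
  rw [kAlpha_eq, kAlpha_eq]
  set S : Set ℕ := {p : ℕ | 1 ≤ p ∧ p ≤ n + 1 ∧ Cond (n + 1) p ℓ m} with hSdef
  set T : Set ℕ := {p : ℕ | 1 ≤ p ∧ p ≤ n ∧ Cond n p (ℓ ∘ i.succAbove) (m ∘ j.succAbove)}
    with hTdef
  have hbddS : BddAbove S := ⟨n + 1, fun p hp => hp.2.1⟩
  have hbddT : BddAbove T := ⟨n, fun p hp => hp.2.1⟩
  have h1S : (1 : ℕ) ∈ S := by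
    refine ⟨le_refl 1, by omega, ?_⟩
    intro i' j' hij'
    have hi' := i'.isLt
    have hj' := j'.isLt
    calc ℓ i' ≤ ℓ i := hℓ.monotone (by simp only [Fin.le_def]; omega)
      _ = m j := h
      _ ≤ m j' := hm.monotone (by simp only [Fin.le_def]; omega)
  have hAmem := Nat.sSup_mem ⟨1, h1S⟩ hbddS
  obtain ⟨A, hA⟩ : ∃ a, sSup S = a := ⟨_, rfl⟩
  rw [hA] at hAmem ⊢
  obtain ⟨hA1, hAk, hAcond⟩ := hAmem
  -- Lower bound: if A ≥ 2, then A - 1 ∈ T.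
  have hlow : 2 ≤ A → A - 1 ∈ T := by
    intro h2
    refine ⟨by omega, by omega, ?_⟩
    intro a c hac
    have ha := a.isLt
    have hc := c.isLt
    simp only [Function.comp_apply]
    by_cases hai : a.val < i.val
    · have e1 : i.succAbove a = ⟨a.val, by omega⟩ :=
        Fin.ext (by rw [succAbove_val, if_pos hai])
      rw [e1]
      calc ℓ ⟨a.val, by omega⟩ ≤ m ⟨c.val, by omega⟩ :=
            hAcond ⟨a.val, by omega⟩ ⟨c.val, by omega⟩
              (by simp only [Fin.val_mk]; omega)
        _ ≤ m (j.succAbove c) := hm.monotone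
            (by simp only [Fin.le_def, Fin.val_mk, succAbove_val]; split <;> omega)
    · have e1 : i.succAbove a = ⟨a.val + 1, by omega⟩ :=
        Fin.ext (by rw [succAbove_val, if_neg hai])
      by_cases hcj : c.val < j.val
      · exfalso
        have hk1 : ℓ (⟨a.val, by omega⟩ : Fin (n + 1)) ≤ m ⟨c.val, by omega⟩ :=
          hAcond _ _ (by simp only [Fin.val_mk]; omega)
        have hk2 : ℓ i ≤ ℓ (⟨a.val, by omega⟩ : Fin (n + 1)) :=
          hℓ.monotone (by simp only [Fin.le_def, Fin.val_mk]; omega)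
        have hk3 : m (⟨c.val, by omega⟩ : Fin (n + 1)) < m j :=
          hm (by simp only [Fin.lt_def, Fin.val_mk]; omega)
        linarith [h]
      · have e2 : j.succAbove c = ⟨c.val + 1, by omega⟩ :=
          Fin.ext (by rw [succAbove_val, if_neg hcj])
        rw [e1, e2]
        exact hAcond _ _ (by simp only [Fin.val_mk]; omega)
  -- Upper bound: every p ∈ T satisfies p ≤ A - 1.
  have hT_le : ∀ p ∈ T, p ≤ A - 1 := by
    intro p hp
    by_contra hcon
    obtain ⟨hp1, hpn, hpcond⟩ := hp
    have hAp : A ≤ p := by omega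
    have hcondA : Cond n A (ℓ ∘ i.succAbove) (m ∘ j.succAbove) :=
      cond_mono hm' hpcond hAp hpn
    have hAn : A ≤ n := le_trans hAp hpn
    have hnew : A + 1 ∈ S := by
      refine ⟨by omega, by omega, ?_⟩
      intro i' j' hij'
      have hi' := i'.isLt
      have hj' := j'.isLt
      have hiv := i.isLt
      have hjv := j.isLt
      by_cases h1 : i'.val < i.val
      · by_cases h2 : j'.val < j.val
        · have hi'n : i'.val < n := by omega
          have hj'n : j'.val < n := by omega
          have hkey := hcondA ⟨i'.val, hi'n⟩ ⟨j'.val, hj'n⟩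
            (by simp only [Fin.val_mk]; omega)
          simp only [Function.comp_apply] at hkey
          have e1 : i.succAbove ⟨i'.val, hi'n⟩ = i' :=
            Fin.ext (by rw [succAbove_val]; simp only [Fin.val_mk]; split <;> omega)
          have e2 : j.succAbove ⟨j'.val, hj'n⟩ = j' :=
            Fin.ext (by rw [succAbove_val]; simp only [Fin.val_mk]; split <;> omega)
          rwa [e1, e2] at hkey
        · calc ℓ i' ≤ ℓ i := hℓ.monotone (by simp only [Fin.le_def]; omega)
            _ = m j := h
            _ ≤ m j' := hm.monotone (by simp only [Fin.le_def]; omega)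
      · by_cases h3 : i.val < i'.val
        · have ha : i'.val - 1 < n := by omega
          have hb : j'.val - 1 < n := by omega
          have hkey := hcondA ⟨i'.val - 1, ha⟩ ⟨j'.val - 1, hb⟩
            (by simp only [Fin.val_mk]; omega)
          simp only [Function.comp_apply] at hkey
          have e1 : i.succAbove ⟨i'.val - 1, ha⟩ = i' :=
            Fin.ext (by rw [succAbove_val]; simp only [Fin.val_mk]; split <;> omega)
          rw [e1] at hkey
          calc ℓ i' ≤ m (j.succAbove ⟨j'.val - 1, hb⟩) := hkey
            _ ≤ m j' := hm.monotone
                (by simp only [Fin.le_def, succAbove_val, Fin.val_mk]; split <;> omega)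
        · have hii : i' = i := Fin.ext (by omega)
          by_cases h4 : j.val ≤ j'.val
          · calc ℓ i' = m j := by rw [hii]; exact h
              _ ≤ m j' := hm.monotone (by simp only [Fin.le_def]; omega)
          · exfalso
            have hs : j'.val = i.val + (n - A) := by omega
            have ha0 : j.val - (n - A) - 1 < n := by omega
            have hc0 : j.val - 1 < n := by omega
            have hkey := hcondA ⟨j.val - (n - A) - 1, ha0⟩ ⟨j.val - 1, hc0⟩
              (by simp only [Fin.val_mk]; omega)
            simp only [Function.comp_apply] at hkey
            have hv1 : (i.succAbove ⟨j.val - (n - A) - 1, ha0⟩).val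
                = j.val - (n - A) := by
              rw [succAbove_val]; simp only [Fin.val_mk]; split <;> omega
            have hv2 : (j.succAbove ⟨j.val - 1, hc0⟩).val = j.val - 1 := by
              rw [succAbove_val]; simp only [Fin.val_mk]; split <;> omega
            have hlt : m (j.succAbove ⟨j.val - 1, hc0⟩) < m j :=
              hm (by rw [Fin.lt_def, hv2]; omega)
            have hlt2 : ℓ (i.succAbove ⟨j.val - (n - A) - 1, ha0⟩) < ℓ i := by
              rw [h]; linarith
            have hfin := hℓ.lt_iff_lt.mp hlt2
            rw [Fin.lt_def, hv1] at hfin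
            omega
    have := le_csSup hbddS hnew
    rw [hA] at this
    omega
  have hub : sSup T ≤ A - 1 := by
    rcases Set.eq_empty_or_nonempty T with hTe | hTne
    · simp [hTe]
    · exact csSup_le hTne hT_le
  have hlb : A - 1 ≤ sSup T := by
    rcases Nat.lt_or_ge A 2 with h2 | h2
    · omega
    · exact le_csSup hbddT (hlow h2)
  omega
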